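/- arXiv:2112.14004 — 2 statements merged into one kernel-verified Lean document; each statement's English description precedes it below -/
import Mathlib

section
/- Realizability implies zero weak approximation error: if (u_A, w_A) is optimal for the dual LP, μ_{π_A} = Φθ_A for some θ_A ∈ Θ, and u_A = Ψλ_A for some λ_A ∈ Λ, then (θ_A, λ_A, w_A) is a saddle point of the linearly-relaxed problem min_{θ∈Θ} max_{λ∈Λ, w∈W} L_r(θ,λ,w). -/
/-!
Under realizability, `L_r(θ_A, λ, w)` does not depend on `λ` (both occupancy measures satisfy
`T_γ μ = ν`) and equals `⟨μ_{π_A} - μ_{π_E}, c_w⟩`, while `L_r(θ, λ_A, w_A)` is the dual objective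
plus `⟨Φθ, c_{w_A} - T*_γ u_A⟩ ≥ 0`. Both saddle inequalities therefore follow from weak duality
together with strong duality `δ_C(π_A, π_E) ≤ ⟨μ_{π_E}, T*_γ u_A - c_{w_A}⟩`.

Strong duality: a nonnegative solution of `T_γ μ = ν` is the occupancy measure of its induced
policy (the difference of the two satisfies a homogeneous flow equation, which contracts in `ℓ¹`),
so `δ_C(π_A, π_E) ≤ max_j ⟨μ - μ_{π_E}, c_j⟩` on the flow polytope. Sion's minimax theorem on the
flow polytope times the simplex yields weights `w` with `δ_C(π_A, π_E) ≤ ⟨μ - μ_{π_E}, c_w⟩` for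
every flow `μ`, and the fixed point of the Bellman operator for `c_w` is a dual-feasible `u` whose
objective is this quantity at the occupancy measure of a greedy policy.
-/

open Finset

variable {X A : Type*} [Fintype X] [Fintype A] [DecidableEq X] [DecidableEq A]
  [Nonempty X] [Nonempty A]

/-- A finite discounted Markov decision process. -/
structure FinMDP (X A : Type*) [Fintype X] [Fintype A] where
  P : X → A → X → ℝ
  P_nonneg : ∀ x a x', 0 ≤ P x a x'
  P_sum : ∀ x a, ∑ x', P x a x' = 1
  ν : X → ℝ
  ν_nonneg : ∀ x, 0 ≤ ν x
  ν_sum : ∑ x, ν x = 1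
  γ : ℝ
  γ_pos : 0 < γ
  γ_lt_one : γ < 1

/-- A stationary Markov policy. -/
def FinMDP.IsPolicy (π : X → A → ℝ) : Prop :=
  (∀ x a, 0 ≤ π x a) ∧ ∀ x, ∑ a, π x a = 1

namespace FinMDP

variable (M : FinMDP X A)

/-- The state-action distribution at time `t` of policy `π` started from `ν'`. -/
noncomputable def saDist (ν' : X → ℝ) (π : X → A → ℝ) : ℕ → X × A → ℝ
  | 0 => fun p => ν' p.1 * π p.1 p.2
  | t + 1 => fun p => (∑ q : X × A, saDist ν' π t q * M.P q.1 q.2 p.1) * π p.1 p.2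

/-- The normalized discounted occupancy measure of `π` started from `ν'`. -/
noncomputable def occFrom (ν' : X → ℝ) (π : X → A → ℝ) (p : X × A) : ℝ :=
  (1 - M.γ) * ∑' t : ℕ, M.γ ^ t * M.saDist ν' π t p

/-- The normalized discounted occupancy measure of `π` (from the initial distribution). -/
noncomputable def occ (π : X → A → ℝ) : X × A → ℝ :=
  M.occFrom M.ν π

/-- The (normalized) value function of policy `π` for cost `c`. -/
noncomputable def value (c : X × A → ℝ) (π : X → A → ℝ) (x : X) : ℝ :=
  ∑ p : X × A, M.occFrom (fun y => if y = x then 1 else 0) π p * c p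

/-- The total expected (normalized) discounted cost `ρ_c(π) = ⟨μ_π, c⟩`. -/
noncomputable def cost (c : X × A → ℝ) (π : X → A → ℝ) : ℝ :=
  ∑ p : X × A, M.occ π p * c p

/-- The Bellman flow operator `T_γ μ = (1/(1-γ)) (B - γ P)ᵀ μ`. -/
noncomputable def Tflow (μ : X × A → ℝ) (x' : X) : ℝ :=
  (1 / (1 - M.γ)) * ((∑ a, μ (x', a)) - M.γ * ∑ p : X × A, μ p * M.P p.1 p.2 x')

/-- The adjoint operator `T*_γ u = (1/(1-γ)) (B - γ P) u`. -/
noncomputable def Tadj (u : X → ℝ) (p : X × A) : ℝ :=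
  (1 / (1 - M.γ)) * (u p.1 - M.γ * ∑ x', M.P p.1 p.2 x' * u x')

/-- `π` is an optimal policy for the forward RL problem with cost `c`. -/
def IsOptimal (c : X × A → ℝ) (π : X → A → ℝ) : Prop :=
  IsPolicy π ∧ ∀ π', IsPolicy π' → M.cost c π ≤ M.cost c π'

/-- The optimal value function `V*_c(x) = min_π V_c^π(x)`. -/
noncomputable def Vstar (c : X × A → ℝ) (x : X) : ℝ :=
  sInf {v | ∃ π, IsPolicy π ∧ v = M.value c π x}

end FinMDP

/-- The policy induced by a state-action distribution:
`π_μ(a|x) = μ(x,a) / ∑_{a'} μ(x,a')` (uniform on zero-mass states). -/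
noncomputable def inducedPolicy (μ : X × A → ℝ) (x : X) (a : A) : ℝ :=
  if (∑ a' : A, μ (x, a')) = 0 then (1 : ℝ) / (Fintype.card A)
  else μ (x, a) / ∑ a' : A, μ (x, a')

/-- `μ` is a probability distribution on state-action pairs. -/
def IsDist (μ : X × A → ℝ) : Prop := (∀ p, 0 ≤ μ p) ∧ ∑ p : X × A, μ p = 1

/-- Membership in the probability simplex `Δ_{[n]}`. -/
def simplexPt {n : ℕ} (w : Fin n → ℝ) : Prop := (∀ i, 0 ≤ w i) ∧ ∑ i, w i = 1

/-- The `ℓ¹` norm of a finitely supported vector. -/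
noncomputable def l1 {ι : Type*} [Fintype ι] (f : ι → ℝ) : ℝ := ∑ i, |f i|

/-- The `ℓ∞` norm of a finitely supported vector. -/
noncomputable def linf {ι : Type*} [Fintype ι] [Nonempty ι] (f : ι → ℝ) : ℝ :=
  Finset.univ.sup' Finset.univ_nonempty fun i => |f i|

/-- The cost `c_w = ∑ᵢ wᵢ cᵢ` parameterized by weights `w`. -/
noncomputable def costW {nc : ℕ} (c : Fin nc → X × A → ℝ) (w : Fin nc → ℝ) :
    X × A → ℝ :=
  fun p => ∑ i, w i * c i p

/-- The objective of the dual LP `(D_{π_E})`. -/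
noncomputable def dualObj {nc : ℕ} (M : FinMDP X A) (c : Fin nc → X × A → ℝ)
    (πE : X → A → ℝ) (u : X → ℝ) (w : Fin nc → ℝ) : ℝ :=
  ∑ p : X × A, M.occ πE p * (M.Tadj u p - costW c w p)

/-- Feasibility for the dual LP `(D_{π_E})`. -/
def dualFeasible {nc : ℕ} (M : FinMDP X A) (c : Fin nc → X × A → ℝ)
    (u : X → ℝ) (w : Fin nc → ℝ) : Prop :=
  simplexPt w ∧ ∀ p, 0 ≤ costW c w p - M.Tadj u p

/-- Optimality for the dual LP `(D_{π_E})`. -/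
def dualOptimal {nc : ℕ} (M : FinMDP X A) (c : Fin nc → X × A → ℝ)
    (πE : X → A → ℝ) (u : X → ℝ) (w : Fin nc → ℝ) : Prop :=
  dualFeasible M c u w ∧
    ∀ u' w', dualFeasible M c u' w' → dualObj M c πE u' w' ≤ dualObj M c πE u w

/-- The `C`-distance `δ_C(π, π_E) = max_i (ρ_{c_i}(π) - ρ_{c_i}(π_E))`. -/
noncomputable def gapMax {nc : ℕ} [NeZero nc] (M : FinMDP X A)
    (c : Fin nc → X × A → ℝ) (πE π : X → A → ℝ) : ℝ :=
  haveI : Nonempty (Fin nc) := ⟨⟨0, Nat.pos_of_ne_zero (NeZero.ne nc)⟩⟩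
  Finset.univ.sup' Finset.univ_nonempty fun i => M.cost (c i) π - M.cost (c i) πE

/-- `π_A` is an apprentice policy: it minimizes `δ_C(·, π_E)` over stationary policies. -/
def IsApprentice {nc : ℕ} [NeZero nc] (M : FinMDP X A)
    (c : Fin nc → X × A → ℝ) (πE πA : X → A → ℝ) : Prop :=
  FinMDP.IsPolicy πA ∧
    ∀ π, FinMDP.IsPolicy π → gapMax M c πE πA ≤ gapMax M c πE π

/-- The parameter set `Λ = {λ : ‖λ‖₂ ≤ β/√n_u}`. -/
def lamSet (nu : ℕ) (β : ℝ) : Set (Fin nu → ℝ) :=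
  {l | Real.sqrt (∑ k, l k ^ 2) ≤ β / Real.sqrt nu}

/-- The reduced Lagrangian `L_r(θ, λ, w) = ⟨μ_θ - μ_{π_E}, c_w - T*_γ u_λ⟩`. -/
noncomputable def Lr {nm nu nc : ℕ} (M : FinMDP X A)
    (Φ : Fin nm → X × A → ℝ) (Ψ : Fin nu → X → ℝ) (c : Fin nc → X × A → ℝ)
    (πE : X → A → ℝ) (θ : Fin nm → ℝ) (lam : Fin nu → ℝ) (w : Fin nc → ℝ) : ℝ :=
  ∑ p : X × A, ((∑ i, θ i * Φ i p) - M.occ πE p) *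
    ((∑ j, w j * c j p) - M.Tadj (fun x => ∑ k, lam k * Ψ k x) p)

/-- The saddle-point residual of a point `(θ, λ, w)` for the reduced Lagrangian. -/
noncomputable def epsSad {nm nu nc : ℕ} (M : FinMDP X A)
    (Φ : Fin nm → X × A → ℝ) (Ψ : Fin nu → X → ℝ) (c : Fin nc → X × A → ℝ)
    (πE : X → A → ℝ) (β : ℝ)
    (θ : Fin nm → ℝ) (lam : Fin nu → ℝ) (w : Fin nc → ℝ) : ℝ :=
  sSup {v | ∃ lam' ∈ lamSet nu β, ∃ w', simplexPt w' ∧ v = Lr M Φ Ψ c πE θ lam' w'} -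
    sInf {v | ∃ θ', simplexPt θ' ∧ v = Lr M Φ Ψ c πE θ' lam w}

namespace FinMDP

variable {S Act : Type*} [Fintype S] [Fintype Act] (M : FinMDP S Act) {π : S → Act → ℝ}

lemma one_sub_gamma_pos : 0 < 1 - M.γ := sub_pos.mpr M.γ_lt_one

lemma one_sub_gamma_mul_Tflow (μ : S × Act → ℝ) (x : S) :
    (1 - M.γ) * M.Tflow μ x = ∑ a, μ (x, a) - M.γ * ∑ p : S × Act, μ p * M.P p.1 p.2 x := by
  rw [Tflow, ← mul_assoc, mul_one_div_cancel M.one_sub_gamma_pos.ne', one_mul]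

lemma one_sub_gamma_mul_Tadj (u : S → ℝ) (p : S × Act) :
    (1 - M.γ) * M.Tadj u p = u p.1 - M.γ * ∑ x', M.P p.1 p.2 x' * u x' := by
  rw [Tadj, ← mul_assoc, mul_one_div_cancel M.one_sub_gamma_pos.ne', one_mul]

lemma Tflow_apply_eq_iff (μ : S × Act → ℝ) (x : S) :
    M.Tflow μ x = M.ν x ↔
      ∑ a, μ (x, a) = (1 - M.γ) * M.ν x + M.γ * ∑ p : S × Act, μ p * M.P p.1 p.2 x := by
  rw [← mul_right_inj' M.one_sub_gamma_pos.ne', one_sub_gamma_mul_Tflow]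
  constructor <;> intro h <;> linarith

lemma sum_mul_Tadj (μ : S × Act → ℝ) (u : S → ℝ) :
    ∑ p, μ p * M.Tadj u p = ∑ x, M.Tflow μ x * u x := by
  have hmarg : ∑ p : S × Act, μ p * u p.1 = ∑ x, (∑ a, μ (x, a)) * u x := by
    simp only [Fintype.sum_prod_type, sum_mul]
  have hstep : ∑ p : S × Act, μ p * ∑ x', M.P p.1 p.2 x' * u x' =
      ∑ x', (∑ p : S × Act, μ p * M.P p.1 p.2 x') * u x' := by
    simp only [mul_sum, sum_mul, mul_assoc]
    exact sum_comm
  simp only [Tadj, Tflow, mul_sub, sub_mul, mul_left_comm (μ _), mul_assoc, ← mul_sum,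
    sum_sub_distrib, hmarg, hstep]

lemma Tadj_one : M.Tadj 1 = 1 := by
  funext p
  simp [Tadj, M.P_sum, inv_mul_cancel₀ M.one_sub_gamma_pos.ne']

lemma saDist_nonneg (hπ : IsPolicy π) (t : ℕ) (p : S × Act) : 0 ≤ M.saDist M.ν π t p := by
  induction t generalizing p with
  | zero => exact mul_nonneg (M.ν_nonneg _) (hπ.1 _ _)
  | succ t ih =>
    exact mul_nonneg (sum_nonneg fun q _ => mul_nonneg (ih q) (M.P_nonneg _ _ _)) (hπ.1 _ _)

lemma sum_saDist_zero (hπ : IsPolicy π) (x : S) : ∑ a, M.saDist M.ν π 0 (x, a) = M.ν x := by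
  simp only [saDist, ← mul_sum, hπ.2 x, mul_one]

lemma sum_saDist_succ (hπ : IsPolicy π) (t : ℕ) (x : S) :
    ∑ a, M.saDist M.ν π (t + 1) (x, a) = ∑ q : S × Act, M.saDist M.ν π t q * M.P q.1 q.2 x := by
  simp only [saDist, ← mul_sum, hπ.2 x, mul_one]

lemma saDist_eq_sum_mul (hπ : IsPolicy π) (t : ℕ) (x : S) (a : Act) :
    M.saDist M.ν π t (x, a) = (∑ a', M.saDist M.ν π t (x, a')) * π x a := by
  cases t with
  | zero => rw [M.sum_saDist_zero hπ]; rfl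
  | succ t => rw [M.sum_saDist_succ hπ]; rfl

lemma sum_saDist (hπ : IsPolicy π) (t : ℕ) : ∑ p : S × Act, M.saDist M.ν π t p = 1 := by
  induction t with
  | zero => simp only [Fintype.sum_prod_type, M.sum_saDist_zero hπ, M.ν_sum]
  | succ t ih =>
    rw [Fintype.sum_prod_type]
    simp only [M.sum_saDist_succ hπ]
    rw [sum_comm]
    simp only [← mul_sum, M.P_sum, mul_one, ih]

lemma summable_saDist (hπ : IsPolicy π) (p : S × Act) :
    Summable fun t : ℕ => M.γ ^ t * M.saDist M.ν π t p := by
  refine .of_nonneg_of_le (fun t => mul_nonneg (pow_nonneg M.γ_pos.le t) (M.saDist_nonneg hπ t p))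
    (fun t => mul_le_of_le_one_right (pow_nonneg M.γ_pos.le t) ?_)
    (summable_geometric_of_lt_one M.γ_pos.le M.γ_lt_one)
  calc M.saDist M.ν π t p ≤ ∑ q, M.saDist M.ν π t q :=
        single_le_sum (fun q _ => M.saDist_nonneg hπ t q) (mem_univ p)
    _ = 1 := M.sum_saDist hπ t

lemma occ_nonneg (hπ : IsPolicy π) (p : S × Act) : 0 ≤ M.occ π p :=
  mul_nonneg M.one_sub_gamma_pos.le <|
    tsum_nonneg fun t => mul_nonneg (pow_nonneg M.γ_pos.le t) (M.saDist_nonneg hπ t p)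

lemma occ_eq_sum_mul (hπ : IsPolicy π) (x : S) (a : Act) :
    M.occ π (x, a) = (∑ a', M.occ π (x, a')) * π x a := by
  simp only [occ, occFrom, ← mul_sum]
  rw [← Summable.tsum_finsetSum fun a' _ => M.summable_saDist hπ (x, a'), mul_assoc,
    ← tsum_mul_right]
  congr 1
  refine tsum_congr fun t => ?_
  rw [M.saDist_eq_sum_mul hπ, ← mul_sum]
  ring

lemma sum_occ_eq (hπ : IsPolicy π) (x : S) :
    ∑ a, M.occ π (x, a) = (1 - M.γ) * M.ν x + M.γ * ∑ p : S × Act, M.occ π p * M.P p.1 p.2 x := by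
  have hsucc (t : ℕ) : ∑ a, M.γ ^ (t + 1) * M.saDist M.ν π (t + 1) (x, a) =
      M.γ * ∑ q : S × Act, M.γ ^ t * M.saDist M.ν π t q * M.P q.1 q.2 x := by
    simp only [← mul_sum, M.sum_saDist_succ hπ, pow_succ, mul_assoc, mul_left_comm M.γ]
  have hsum : Summable fun t : ℕ => ∑ a, M.γ ^ t * M.saDist M.ν π t (x, a) :=
    summable_sum fun a _ => M.summable_saDist hπ (x, a)
  simp only [occ, occFrom, ← mul_sum]
  rw [← Summable.tsum_finsetSum fun a _ => M.summable_saDist hπ (x, a),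
    hsum.tsum_eq_zero_add, tsum_congr hsucc, tsum_mul_left,
    Summable.tsum_finsetSum fun q _ => (M.summable_saDist hπ q).mul_right _]
  simp only [pow_zero, one_mul, M.sum_saDist_zero hπ, tsum_mul_right, mul_add, mul_sum]
  ring_nf

lemma Tflow_occ (hπ : IsPolicy π) : M.Tflow (M.occ π) = M.ν :=
  funext fun x => (M.Tflow_apply_eq_iff _ x).2 (M.sum_occ_eq hπ x)

lemma sum_occ_mul_Tadj (hπ : IsPolicy π) (u : S → ℝ) :
    ∑ p, M.occ π p * M.Tadj u p = ∑ x, M.ν x * u x := by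
  rw [sum_mul_Tadj, Tflow_occ M hπ]

end FinMDP

section InducedPolicy

variable {S Act : Type*} [Fintype Act]

lemma isPolicy_inducedPolicy [Nonempty Act] {μ : S × Act → ℝ} (hμ : 0 ≤ μ) :
    FinMDP.IsPolicy (inducedPolicy μ) := by
  refine ⟨fun x a => ?_, fun x => ?_⟩ <;> unfold inducedPolicy <;> split_ifs with h
  · positivity
  · exact div_nonneg (hμ _) (sum_nonneg fun a' _ => hμ _)
  · simp
  · rw [← sum_div, div_self h]

lemma eq_sum_mul_inducedPolicy {μ : S × Act → ℝ} (hμ : 0 ≤ μ) (x : S) (a : Act) :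
    μ (x, a) = (∑ a', μ (x, a')) * inducedPolicy μ x a := by
  unfold inducedPolicy
  split_ifs with h
  · rw [h, zero_mul]
    exact (sum_eq_zero_iff_of_nonneg fun a' _ => hμ (x, a')).1 h a (mem_univ a)
  · rw [mul_div_cancel₀ _ h]

end InducedPolicy

namespace FinMDP

variable {S Act : Type*} [Fintype S] [Fintype Act] (M : FinMDP S Act) {π : S → Act → ℝ}

def flowSet : Set (S × Act → ℝ) := Set.Ici 0 ∩ M.Tflow ⁻¹' {M.ν}

lemma occ_mem_flowSet (hπ : IsPolicy π) : M.occ π ∈ M.flowSet :=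
  ⟨M.occ_nonneg hπ, M.Tflow_occ hπ⟩

lemma isLinearMap_Tflow : IsLinearMap ℝ M.Tflow where
  map_add μ₁ μ₂ := by
    funext x
    simp only [Tflow, Pi.add_apply, sum_add_distrib, add_mul]
    ring
  map_smul a μ := by
    funext x
    simp only [Tflow, Pi.smul_apply, smul_eq_mul, mul_assoc, ← mul_sum]
    ring

lemma continuous_Tflow : Continuous M.Tflow := by
  unfold Tflow
  fun_prop

lemma convex_flowSet : Convex ℝ M.flowSet :=
  (convex_Ici 0).inter ((convex_singleton _).is_linear_preimage M.isLinearMap_Tflow)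

lemma sum_eq_one_of_mem_flowSet {μ : S × Act → ℝ} (hμ : μ ∈ M.flowSet) : ∑ p, μ p = 1 := by
  have hflow : M.Tflow μ = M.ν := hμ.2
  simpa [Tadj_one, hflow, M.ν_sum] using M.sum_mul_Tadj μ 1

lemma isCompact_flowSet : IsCompact M.flowSet := by
  refine (isCompact_univ_pi fun _ => isCompact_Icc (a := (0 : ℝ)) (b := 1)).of_isClosed_subset
    (isClosed_Ici.inter (isClosed_singleton.preimage M.continuous_Tflow))
    fun μ hμ p _ => ⟨hμ.1 p, ?_⟩
  calc μ p ≤ ∑ q, μ q := single_le_sum (fun q _ => hμ.1 q) (mem_univ p)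
    _ = 1 := M.sum_eq_one_of_mem_flowSet hμ

-- The hypotheses give `∑ |d| ≤ γ ∑ |d|`, and `γ < 1`.
lemma eq_zero_of_sum_eq_gamma_mul (hπ : IsPolicy π) {d : S × Act → ℝ}
    (hfac : ∀ x a, d (x, a) = (∑ a', d (x, a')) * π x a)
    (hflow : ∀ x, ∑ a, d (x, a) = M.γ * ∑ p : S × Act, d p * M.P p.1 p.2 x) : d = 0 := by
  have hcontr : ∑ p, |d p| ≤ M.γ * ∑ p, |d p| :=
    calc ∑ p, |d p| = ∑ x, ∑ a, |∑ a', d (x, a')| * π x a := by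
          simp only [Fintype.sum_prod_type, fun x a => congrArg abs (hfac x a), abs_mul,
            abs_of_nonneg (hπ.1 _ _)]
      _ = ∑ x, M.γ * |∑ p : S × Act, d p * M.P p.1 p.2 x| := by
          simp only [← mul_sum, hπ.2, mul_one, hflow, abs_mul, abs_of_pos M.γ_pos]
      _ ≤ ∑ x, M.γ * ∑ p : S × Act, |d p| * M.P p.1 p.2 x := by
          refine sum_le_sum fun x _ => mul_le_mul_of_nonneg_left ?_ M.γ_pos.le
          refine (abs_sum_le_sum_abs (fun p => d p * M.P p.1 p.2 x) univ).trans_eq (sum_congr rfl fun p _ => ?_)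
          rw [abs_mul, abs_of_nonneg (M.P_nonneg _ _ _)]
      _ = M.γ * ∑ p, |d p| := by
          rw [← mul_sum, sum_comm]
          simp only [← mul_sum, M.P_sum, mul_one]
  have hzero : ∑ p, |d p| = 0 :=
    le_antisymm (by nlinarith [M.γ_lt_one]) (sum_nonneg fun p _ => abs_nonneg _)
  funext p
  exact abs_eq_zero.1 ((sum_eq_zero_iff_of_nonneg fun q _ => abs_nonneg (d q)).1 hzero p (mem_univ p))

lemma occ_inducedPolicy [Nonempty Act] {μ : S × Act → ℝ} (hμ : μ ∈ M.flowSet) :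
    M.occ (inducedPolicy μ) = μ := by
  have hπ := isPolicy_inducedPolicy hμ.1
  have hflow : M.Tflow μ = M.ν := hμ.2
  refine sub_eq_zero.1 (M.eq_zero_of_sum_eq_gamma_mul hπ (fun x a => ?_) fun x => ?_)
  · simp only [Pi.sub_apply, sum_sub_distrib, sub_mul]
    rw [← M.occ_eq_sum_mul hπ, ← eq_sum_mul_inducedPolicy hμ.1]
  · simp only [Pi.sub_apply, sum_sub_distrib, sub_mul]
    rw [M.sum_occ_eq hπ, (M.Tflow_apply_eq_iff μ x).1 (congrFun hflow x)]
    ring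

end FinMDP


namespace FinMDP

variable {S Act : Type*} [Fintype S] [Fintype Act] (M : FinMDP S Act)

def bellOp [Nonempty Act] (c : S × Act → ℝ) (u : S → ℝ) (x : S) : ℝ :=
  univ.inf' univ_nonempty fun a => (1 - M.γ) * c (x, a) + M.γ * ∑ x', M.P x a x' * u x'

lemma sum_P_mul_le_add_dist (x : S) (a : Act) (u v : S → ℝ) :
    ∑ x', M.P x a x' * u x' ≤ ∑ x', M.P x a x' * v x' + dist u v :=
  calc ∑ x', M.P x a x' * u x' ≤ ∑ x', M.P x a x' * (v x' + dist u v) := by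
        refine sum_le_sum fun x' _ => mul_le_mul_of_nonneg_left ?_ (M.P_nonneg x a x')
        have := (le_abs_self _).trans ((Real.dist_eq (u x') (v x')).symm.le.trans
          (dist_le_pi_dist u v x'))
        linarith
    _ = ∑ x', M.P x a x' * v x' + dist u v := by
        simp only [mul_add, sum_add_distrib, ← sum_mul, M.P_sum, one_mul]

lemma bellOp_le_add_dist [Nonempty Act] (c : S × Act → ℝ) (u v : S → ℝ) (x : S) :
    M.bellOp c u x ≤ M.bellOp c v x + M.γ * dist u v := by
  obtain ⟨a, -, ha⟩ := exists_mem_eq_inf' univ_nonempty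
    fun a => (1 - M.γ) * c (x, a) + M.γ * ∑ x', M.P x a x' * v x'
  calc M.bellOp c u x ≤ (1 - M.γ) * c (x, a) + M.γ * ∑ x', M.P x a x' * u x' :=
        inf'_le _ (mem_univ a)
    _ ≤ (1 - M.γ) * c (x, a) + M.γ * ∑ x', M.P x a x' * v x' + M.γ * dist u v := by
        nlinarith [M.sum_P_mul_le_add_dist x a u v, M.γ_pos]
    _ = M.bellOp c v x + M.γ * dist u v := by rw [bellOp, ha]

lemma dist_bellOp_le [Nonempty Act] (c : S × Act → ℝ) (u v : S → ℝ) :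
    dist (M.bellOp c u) (M.bellOp c v) ≤ M.γ * dist u v :=
  (dist_pi_le_iff (mul_nonneg M.γ_pos.le dist_nonneg)).2 fun x => by
    have h := M.bellOp_le_add_dist c v u x
    rw [dist_comm] at h
    rw [Real.dist_eq, abs_sub_le_iff]
    constructor <;> linarith [M.bellOp_le_add_dist c u v x]

lemma contractingWith_bellOp [Nonempty Act] (c : S × Act → ℝ) :
    ContractingWith ⟨M.γ, M.γ_pos.le⟩ (M.bellOp c) :=
  ⟨M.γ_lt_one, LipschitzWith.of_dist_le_mul (M.dist_bellOp_le c)⟩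

-- The fixed point `V` of the Bellman operator satisfies `T*_γ V ≤ c`, with equality along the
-- actions of a greedy policy.
theorem exists_Tadj_le_cost_eq [Nonempty Act] [DecidableEq Act] (c : S × Act → ℝ) :
    ∃ (u : S → ℝ) (π : S → Act → ℝ), IsPolicy π ∧ (∀ p, M.Tadj u p ≤ c p) ∧
      M.cost c π = ∑ x, M.ν x * u x := by
  set V := ContractingWith.fixedPoint (M.bellOp c) (M.contractingWith_bellOp c)
  have hV : M.bellOp c V = V := ContractingWith.fixedPoint_isFixedPt _
  have hgreedy (x : S) : ∃ a, M.Tadj V (x, a) = c (x, a) := by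
    obtain ⟨a, -, ha⟩ := exists_mem_eq_inf' univ_nonempty
      fun a => (1 - M.γ) * c (x, a) + M.γ * ∑ x', M.P x a x' * V x'
    refine ⟨a, mul_left_cancel₀ M.one_sub_gamma_pos.ne' ?_⟩
    have hx := congrFun hV x
    rw [bellOp, ha] at hx
    rw [one_sub_gamma_mul_Tadj]
    linarith
  choose greedy hgreedy using hgreedy
  have hπ : IsPolicy fun x a => if a = greedy x then (1 : ℝ) else 0 :=
    ⟨fun x a => by dsimp only; split_ifs <;> norm_num, fun x => by simp⟩
  refine ⟨V, _, hπ, fun p => le_of_mul_le_mul_left ?_ M.one_sub_gamma_pos, ?_⟩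
  · have hp : V p.1 ≤ (1 - M.γ) * c p + M.γ * ∑ x', M.P p.1 p.2 x' * V x' :=
      (congrFun hV p.1).symm.le.trans (inf'_le _ (mem_univ p.2))
    rw [one_sub_gamma_mul_Tadj]
    linarith
  · rw [cost, ← M.sum_occ_mul_Tadj hπ V]
    refine sum_congr rfl fun ⟨x, a⟩ _ => ?_
    by_cases ha : a = greedy x
    · rw [ha, hgreedy]
    · rw [M.occ_eq_sum_mul hπ, if_neg ha, mul_zero, zero_mul, zero_mul]

end FinMDP

lemma quasilinearOn_of_affine {E : Type*} [AddCommMonoid E] [Module ℝ E] {s : Set E}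
    (hs : Convex ℝ s) {f : E → ℝ}
    (hf : ∀ x y (a b : ℝ), a + b = 1 → f (a • x + b • y) = a * f x + b * f y) :
    QuasilinearOn ℝ s f :=
  ⟨ConvexOn.quasiconvexOn ⟨hs, fun x _ y _ a b _ _ hab => (hf x y a b hab).le⟩,
    ConcaveOn.quasiconcaveOn ⟨hs, fun x _ y _ a b _ _ hab => (hf x y a b hab).ge⟩⟩

section Duality

variable {S Act : Type*} [Fintype S] [Fintype Act] (M : FinMDP S Act) {nc : ℕ}
  (c : Fin nc → S × Act → ℝ) (πE : S → Act → ℝ)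

noncomputable def weightedGap (μ : S × Act → ℝ) (w : Fin nc → ℝ) : ℝ :=
  ∑ j, w j * ∑ p, (μ p - M.occ πE p) * c j p

lemma weightedGap_eq_sum_costW (μ : S × Act → ℝ) (w : Fin nc → ℝ) :
    weightedGap M c πE μ w = ∑ p, (μ p - M.occ πE p) * costW c w p := by
  simp only [weightedGap, costW, mul_sum]
  rw [sum_comm]
  exact sum_congr rfl fun _ _ => sum_congr rfl fun _ _ => by ring

lemma weightedGap_smul_add_smul_left (μ₁ μ₂ : S × Act → ℝ) (w : Fin nc → ℝ) {a b : ℝ}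
    (hab : a + b = 1) :
    weightedGap M c πE (a • μ₁ + b • μ₂) w =
      a * weightedGap M c πE μ₁ w + b * weightedGap M c πE μ₂ w := by
  obtain rfl : b = 1 - a := by linarith
  simp only [weightedGap, Pi.add_apply, Pi.smul_apply, smul_eq_mul, mul_sum, ← sum_add_distrib]
  exact sum_congr rfl fun _ _ => sum_congr rfl fun _ _ => by ring

lemma weightedGap_smul_add_smul_right (μ : S × Act → ℝ) (w₁ w₂ : Fin nc → ℝ) (a b : ℝ) :
    weightedGap M c πE μ (a • w₁ + b • w₂) =
      a * weightedGap M c πE μ w₁ + b * weightedGap M c πE μ w₂ := by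
  simp only [weightedGap, Pi.add_apply, Pi.smul_apply, smul_eq_mul, mul_sum, ← sum_add_distrib]
  exact sum_congr rfl fun _ _ => sum_congr rfl fun _ _ => by ring

lemma weightedGap_occ (π : S → Act → ℝ) (w : Fin nc → ℝ) :
    weightedGap M c πE (M.occ π) w = ∑ j, w j * (M.cost (c j) π - M.cost (c j) πE) := by
  simp only [weightedGap, FinMDP.cost, sub_mul, sum_sub_distrib]

lemma weightedGap_occ_single (π : S → Act → ℝ) (j : Fin nc) :
    weightedGap M c πE (M.occ π) (Pi.single j 1) = M.cost (c j) π - M.cost (c j) πE := by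
  simp [weightedGap_occ, Pi.single_apply]

lemma exists_gapMax_eq [NeZero nc] (π : S → Act → ℝ) :
    ∃ j, gapMax M c πE π = M.cost (c j) π - M.cost (c j) πE := by
  obtain ⟨j, -, hj⟩ := exists_mem_eq_sup' univ_nonempty
    fun j : Fin nc => M.cost (c j) π - M.cost (c j) πE
  exact ⟨j, hj⟩

lemma weightedGap_occ_le_gapMax [NeZero nc] (π : S → Act → ℝ) {w : Fin nc → ℝ}
    (hw : simplexPt w) : weightedGap M c πE (M.occ π) w ≤ gapMax M c πE π := by
  rw [weightedGap_occ]
  calc ∑ j, w j * (M.cost (c j) π - M.cost (c j) πE) ≤ ∑ j, w j * gapMax M c πE π :=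
        sum_le_sum fun j _ => mul_le_mul_of_nonneg_left
          (le_sup' (fun j => M.cost (c j) π - M.cost (c j) πE) (mem_univ j)) (hw.1 j)
    _ = gapMax M c πE π := by rw [← sum_mul, hw.2, one_mul]

theorem exists_simplexPt_forall_le_weightedGap {K : Set (S × Act → ℝ)} (hKne : K.Nonempty)
    (hKconv : Convex ℝ K) (hKcpt : IsCompact K) {r : ℝ}
    (hr : ∀ μ ∈ K, ∃ j, r ≤ weightedGap M c πE μ (Pi.single j 1)) :
    ∃ w, simplexPt w ∧ ∀ μ ∈ K, r ≤ weightedGap M c πE μ w := by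
  obtain ⟨j₀, -⟩ := hr _ hKne.some_mem
  have hcont_left (w : Fin nc → ℝ) : Continuous fun μ => weightedGap M c πE μ w := by
    unfold weightedGap
    fun_prop
  have hcont_right (μ : S × Act → ℝ) : Continuous (weightedGap M c πE μ) := by
    unfold weightedGap
    fun_prop
  obtain ⟨μs, hμs, ws, hws, hsaddle⟩ := Sion.exists_isSaddlePointOn hKne hKconv hKcpt
    (fun w _ => (hcont_left w).lowerSemicontinuous.lowerSemicontinuousOn _)
    (fun w _ => (quasilinearOn_of_affine hKconv fun μ₁ μ₂ _ _ hab =>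
      weightedGap_smul_add_smul_left M c πE μ₁ μ₂ w hab).1)
    (convex_stdSimplex ℝ _) ⟨_, single_mem_stdSimplex ℝ j₀⟩ (isCompact_stdSimplex ℝ _)
    (fun μ _ => (hcont_right μ).upperSemicontinuous.upperSemicontinuousOn _)
    (fun μ _ => (quasilinearOn_of_affine (convex_stdSimplex ℝ _) fun w₁ w₂ a b _ =>
      weightedGap_smul_add_smul_right M c πE μ w₁ w₂ a b).2)
  refine ⟨ws, hws, fun μ hμ => ?_⟩
  obtain ⟨j, hj⟩ := hr μs hμs
  exact hj.trans (hsaddle μ hμ _ (single_mem_stdSimplex ℝ j))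

variable {πE}

lemma dualObj_eq (hπE : FinMDP.IsPolicy πE) (u : S → ℝ) (w : Fin nc → ℝ) :
    dualObj M c πE u w = ∑ x, M.ν x * u x - ∑ p, M.occ πE p * costW c w p := by
  simp only [dualObj, mul_sub, sum_sub_distrib, M.sum_occ_mul_Tadj hπE]

lemma dualObj_le_weightedGap (hπE : FinMDP.IsPolicy πE) {π : S → Act → ℝ}
    (hπ : FinMDP.IsPolicy π) {u : S → ℝ} {w : Fin nc → ℝ} (hfeas : dualFeasible M c u w) :
    dualObj M c πE u w ≤ weightedGap M c πE (M.occ π) w := by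
  have h := sum_le_sum fun p (_ : p ∈ univ) =>
    mul_le_mul_of_nonneg_left (sub_nonneg.1 (hfeas.2 p)) (M.occ_nonneg hπ p)
  rw [dualObj_eq M c hπE, weightedGap_eq_sum_costW, ← M.sum_occ_mul_Tadj hπ u]
  simp only [sub_mul, sum_sub_distrib]
  linarith

lemma dualObj_eq_weightedGap_of_cost_eq (hπE : FinMDP.IsPolicy πE) {π : S → Act → ℝ}
    {u : S → ℝ} {w : Fin nc → ℝ} (h : M.cost (costW c w) π = ∑ x, M.ν x * u x) :
    dualObj M c πE u w = weightedGap M c πE (M.occ π) w := by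
  rw [dualObj_eq M c hπE, weightedGap_eq_sum_costW, ← h]
  simp only [FinMDP.cost, sub_mul, sum_sub_distrib]

theorem exists_dualFeasible_gapMax_le_dualObj [NeZero nc] [Nonempty Act] [DecidableEq Act]
    (hπE : FinMDP.IsPolicy πE) {πA : S → Act → ℝ} (hA : IsApprentice M c πE πA) :
    ∃ u w, dualFeasible M c u w ∧ gapMax M c πE πA ≤ dualObj M c πE u w := by
  obtain ⟨w, hw, hgap⟩ := exists_simplexPt_forall_le_weightedGap M c πE
    ⟨_, M.occ_mem_flowSet hπE⟩ M.convex_flowSet M.isCompact_flowSet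
    (r := gapMax M c πE πA) fun μ hμ => by
      obtain ⟨j, hj⟩ := exists_gapMax_eq M c πE (inducedPolicy μ)
      refine ⟨j, ?_⟩
      rw [← M.occ_inducedPolicy hμ, weightedGap_occ_single, ← hj]
      exact hA.2 _ (isPolicy_inducedPolicy hμ.1)
  obtain ⟨u, π, hπ, hfeas, hcost⟩ := M.exists_Tadj_le_cost_eq (costW c w)
  refine ⟨u, w, ⟨hw, fun p => sub_nonneg.2 (hfeas p)⟩, ?_⟩
  rw [dualObj_eq_weightedGap_of_cost_eq M c hπE hcost]
  exact hgap _ (M.occ_mem_flowSet hπ)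

lemma Lr_eq_weightedGap_of_occ {nm nu : ℕ} (Φ : Fin nm → S × Act → ℝ) (Ψ : Fin nu → S → ℝ)
    (hπE : FinMDP.IsPolicy πE) {πA : S → Act → ℝ} (hπA : FinMDP.IsPolicy πA)
    {θ : Fin nm → ℝ} (hθ : (fun p => ∑ i, θ i * Φ i p) = M.occ πA)
    (lam : Fin nu → ℝ) (w : Fin nc → ℝ) :
    Lr M Φ Ψ c πE θ lam w = weightedGap M c πE (M.occ πA) w := by
  simp only [Lr, congrFun hθ, weightedGap_eq_sum_costW, mul_sub, sub_mul, sum_sub_distrib,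
    M.sum_occ_mul_Tadj hπA, M.sum_occ_mul_Tadj hπE, sub_self, sub_zero]
  rfl

lemma Lr_eq_sum_add_dualObj {nm nu : ℕ} (Φ : Fin nm → S × Act → ℝ) (Ψ : Fin nu → S → ℝ)
    (θ : Fin nm → ℝ) (lam : Fin nu → ℝ) (w : Fin nc → ℝ) :
    Lr M Φ Ψ c πE θ lam w =
      ∑ p, (∑ i, θ i * Φ i p) * (costW c w p - M.Tadj (fun x => ∑ k, lam k * Ψ k x) p) +
        dualObj M c πE (fun x => ∑ k, lam k * Ψ k x) w := by
  rw [Lr, dualObj, ← sum_add_distrib]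
  exact sum_congr rfl fun p _ => by unfold costW; ring

end Duality

theorem realizability_saddle_point_general (M : FinMDP X A) {nm nu nc : ℕ} [NeZero nc]
    (Φ : Fin nm → X × A → ℝ) (hΦ : ∀ i, IsDist (Φ i))
    (Ψ : Fin nu → X → ℝ)
    (c : Fin nc → X × A → ℝ)
    (β : ℝ)
    (πE : X → A → ℝ) (hπE : FinMDP.IsPolicy πE)
    (uA : X → ℝ) (wA : Fin nc → ℝ)
    (hdual : dualOptimal M c πE uA wA)
    (πA : X → A → ℝ) (hA : IsApprentice M c πE πA)
    (θA : Fin nm → ℝ)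
    (hreal₁ : (fun p : X × A => ∑ i, θA i * Φ i p) = M.occ πA)
    (lamA : Fin nu → ℝ)
    (hreal₂ : (fun x => ∑ k, lamA k * Ψ k x) = uA) :
    (∀ lam ∈ lamSet nu β, ∀ w, simplexPt w →
      Lr M Φ Ψ c πE θA lam w ≤ Lr M Φ Ψ c πE θA lamA wA) ∧
    (∀ θ, simplexPt θ →
      Lr M Φ Ψ c πE θA lamA wA ≤ Lr M Φ Ψ c πE θ lamA wA) := by
  have hLr_θA := Lr_eq_weightedGap_of_occ M c Φ Ψ hπE hA.1 hreal₁
  have hstrong : gapMax M c πE πA ≤ dualObj M c πE uA wA := by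
    obtain ⟨u, w, hfeas, hgap⟩ := exists_dualFeasible_gapMax_le_dualObj M c hπE hA
    exact hgap.trans (hdual.2 u w hfeas)
  have hvalue : Lr M Φ Ψ c πE θA lamA wA = dualObj M c πE uA wA := by
    rw [hLr_θA]
    exact le_antisymm ((weightedGap_occ_le_gapMax M c πE πA hdual.1.1).trans hstrong)
      (dualObj_le_weightedGap M c hπE hA.1 hdual.1)
  refine ⟨fun lam _ w hw => ?_, fun θ hθ => ?_⟩
  · rw [hLr_θA, hvalue]
    exact (weightedGap_occ_le_gapMax M c πE πA hw).trans hstrong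
  · rw [hvalue, Lr_eq_sum_add_dualObj, hreal₂]
    refine le_add_of_nonneg_left (sum_nonneg fun p _ => mul_nonneg ?_ (hdual.1.2 p))
    exact sum_nonneg fun i _ => mul_nonneg (hθ.1 i) ((hΦ i).1 p)

/-- Realizability implies zero weak approximation error: if `(u_A, w_A)`
is dual optimal, `μ_{π_A} = Φθ_A` and `u_A = Ψλ_A`, then `(θ_A, λ_A, w_A)` is a
saddle point of the linearly-relaxed problem. -/
theorem realizability_saddle_point (M : FinMDP X A) {nm nu nc : ℕ} [NeZero nc]
    (Φ : Fin nm → X × A → ℝ) (hΦ : ∀ i, IsDist (Φ i))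
    (Ψ : Fin nu → X → ℝ) (hΨ : ∀ k x, |Ψ k x| ≤ 1)
    (c : Fin nc → X × A → ℝ) (hc : ∀ j p, |c j p| ≤ 1)
    (β : ℝ) (hβ : 2 ≤ β)
    (πE : X → A → ℝ) (hπE : FinMDP.IsPolicy πE)
    (uA : X → ℝ) (wA : Fin nc → ℝ)
    (hdual : dualOptimal M c πE uA wA)
    (πA : X → A → ℝ) (hA : IsApprentice M c πE πA)
    (θA : Fin nm → ℝ) (hθA : simplexPt θA)
    (hreal₁ : (fun p : X × A => ∑ i, θA i * Φ i p) = M.occ πA)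
    (lamA : Fin nu → ℝ) (hlamA : lamA ∈ lamSet nu β)
    (hreal₂ : (fun x => ∑ k, lamA k * Ψ k x) = uA) :
    (∀ lam ∈ lamSet nu β, ∀ w, simplexPt w →
      Lr M Φ Ψ c πE θA lam w ≤ Lr M Φ Ψ c πE θA lamA wA) ∧
    (∀ θ, simplexPt θ →
      Lr M Φ Ψ c πE θA lamA wA ≤ Lr M Φ Ψ c πE θ lamA wA) :=
  realizability_saddle_point_general M Φ hΦ Ψ c β πE hπE uA wA hdual πA hA θA hreal₁ lamA hreal₂
end

section
/- The second moment of the θ-gradient estimator under local norms satisfies E[‖g_θ‖²_{θ'}] ≤ 16β²n_μ/(1-γ)² for all θ' ∈ Δ_{[n_μ]}, where ‖v‖²_{θ'} = Σᵢ θ'ᵢ vᵢ², improving the worst-case bound ‖g_θ‖²_{θ'} ≤ 16β²n_μ²/(1-γ)² by a factor of n_μ. -/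
open Finset

variable {X A : Type*} [Fintype X] [Fintype A] [DecidableEq X] [DecidableEq A]
  [Nonempty X] [Nonempty A]

/-- Second moment of the `θ`-gradient estimator under local norms:
`E[‖g_θ‖²_{θ'}] ≤ 16β²n_μ/(1-γ)²` for every `θ' ∈ Δ_{[n_μ]}`, improving the
worst-case bound `‖g_θ‖²_{θ'} ≤ 16β²n_μ²/(1-γ)²` by a factor of `n_μ`. -/
theorem theta_gradient_local_norm_second_moment (M : FinMDP X A)
    {nm nu nc : ℕ} (hnm : 0 < nm)
    (Φ : Fin nm → X × A → ℝ) (hΦ : ∀ i, IsDist (Φ i))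
    (Ψ : Fin nu → X → ℝ) (hΨ : ∀ k x, |Ψ k x| ≤ 1)
    (c : Fin nc → X × A → ℝ) (hc : ∀ j p, |c j p| ≤ 1)
    (β : ℝ) (hβ : 2 ≤ β)
    (lam : Fin nu → ℝ) (hlam : ∑ k, |lam k| ≤ β)
    (w : Fin nc → ℝ) (hw : simplexPt w)
    (θ' : Fin nm → ℝ) (hθ' : simplexPt θ') :
    (∑ ι : Fin nm, ∑ p : X × A, ∑ y : X,
        (1 / (nm : ℝ)) * Φ ι p * M.P p.1 p.2 y *
          (θ' ι * ((nm : ℝ) * ((1 - M.γ) * (∑ j, w j * c j p)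
            - ((∑ k, lam k * Ψ k p.1) - M.γ * ∑ k, lam k * Ψ k y) + 2 * β)
              / (1 - M.γ)) ^ 2))
      ≤ 16 * β ^ 2 * (nm : ℝ) / (1 - M.γ) ^ 2 ∧
    ∀ (ι : Fin nm) (p : X × A) (y : X),
      θ' ι * ((nm : ℝ) * ((1 - M.γ) * (∑ j, w j * c j p)
          - ((∑ k, lam k * Ψ k p.1) - M.γ * ∑ k, lam k * Ψ k y) + 2 * β)
            / (1 - M.γ)) ^ 2
        ≤ 16 * β ^ 2 * (nm : ℝ) ^ 2 / (1 - M.γ) ^ 2 := by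
  have hγ1 : (0:ℝ) < 1 - M.γ := by linarith [M.γ_lt_one]
  have hγ0 : (0:ℝ) < M.γ := M.γ_pos
  have hnm' : (0:ℝ) < (nm:ℝ) := by exact_mod_cast hnm
  have hβ0 : (0:ℝ) < β := by linarith
  -- bound on ⟨w, c⟩
  have hwc : ∀ p : X × A, |∑ j, w j * c j p| ≤ 1 := by
    intro p
    calc |∑ j, w j * c j p| ≤ ∑ j, |w j * c j p| := Finset.abs_sum_le_sum_abs _ _
      _ ≤ ∑ j, w j := by
          apply Finset.sum_le_sum; intro j _
          rw [abs_mul, abs_of_nonneg (hw.1 j)]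
          calc w j * |c j p| ≤ w j * 1 := by
                exact mul_le_mul_of_nonneg_left (hc j p) (hw.1 j)
            _ = w j := mul_one _
      _ = 1 := hw.2
  -- bound on ⟨λ, ψ⟩
  have hlp : ∀ x : X, |∑ k, lam k * Ψ k x| ≤ β := by
    intro x
    calc |∑ k, lam k * Ψ k x| ≤ ∑ k, |lam k * Ψ k x| := Finset.abs_sum_le_sum_abs _ _
      _ ≤ ∑ k, |lam k| := by
          apply Finset.sum_le_sum; intro k _
          rw [abs_mul]
          calc |lam k| * |Ψ k x| ≤ |lam k| * 1 :=
                mul_le_mul_of_nonneg_left (hΨ k x) (abs_nonneg _)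
            _ = |lam k| := mul_one _
      _ ≤ β := hlam
  -- the inner quantity A is in [0, 4β]
  set Aq : X × A → X → ℝ := fun p y =>
    (1 - M.γ) * (∑ j, w j * c j p)
      - ((∑ k, lam k * Ψ k p.1) - M.γ * ∑ k, lam k * Ψ k y) + 2 * β with hAq
  have hA : ∀ (p : X × A) (y : X), 0 ≤ Aq p y ∧ Aq p y ≤ 4 * β := by
    intro p y
    have h1 := abs_le.1 (hwc p)
    have h2 := abs_le.1 (hlp p.1)
    have h3 := abs_le.1 (hlp y)
    simp only [hAq]
    constructor
    · nlinarith [M.γ_lt_one, hγ0, h1.1, h1.2, h2.1, h2.2, h3.1, h3.2]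
    · nlinarith [M.γ_lt_one, hγ0, h1.1, h1.2, h2.1, h2.2, h3.1, h3.2]
  -- square bound
  have hsq : ∀ (p : X × A) (y : X),
      ((nm:ℝ) * Aq p y / (1 - M.γ)) ^ 2 ≤ 16 * β ^ 2 * (nm:ℝ) ^ 2 / (1 - M.γ) ^ 2 := by
    intro p y
    obtain ⟨h0, h4⟩ := hA p y
    have hle : (nm:ℝ) * Aq p y / (1 - M.γ) ≤ (nm:ℝ) * (4 * β) / (1 - M.γ) := by
      gcongr
    have hnn : 0 ≤ (nm:ℝ) * Aq p y / (1 - M.γ) :=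
      div_nonneg (mul_nonneg hnm'.le h0) hγ1.le
    calc ((nm:ℝ) * Aq p y / (1 - M.γ)) ^ 2
        ≤ ((nm:ℝ) * (4 * β) / (1 - M.γ)) ^ 2 := by
          exact pow_le_pow_left₀ hnn hle 2
      _ = 16 * β ^ 2 * (nm:ℝ) ^ 2 / (1 - M.γ) ^ 2 := by field_simp; ring
  have hθ1 : ∀ ι, θ' ι ≤ 1 := by
    intro ι
    have := Finset.single_le_sum (f := θ') (fun i _ => hθ'.1 i) (Finset.mem_univ ι)
    rw [hθ'.2] at this; exact this
  constructor
  · set B : ℝ := 16 * β ^ 2 * (nm:ℝ) ^ 2 / (1 - M.γ) ^ 2 with hB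
    have hBnn : 0 ≤ B := by positivity
    calc (∑ ι : Fin nm, ∑ p : X × A, ∑ y : X,
          (1 / (nm : ℝ)) * Φ ι p * M.P p.1 p.2 y *
            (θ' ι * ((nm : ℝ) * Aq p y / (1 - M.γ)) ^ 2))
        ≤ ∑ ι : Fin nm, ∑ p : X × A, ∑ y : X,
            (1 / (nm : ℝ)) * Φ ι p * M.P p.1 p.2 y * (θ' ι * B) := by
          apply Finset.sum_le_sum; intro ι _
          apply Finset.sum_le_sum; intro p _
          apply Finset.sum_le_sum; intro y _
          apply mul_le_mul_of_nonneg_left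
          · exact mul_le_mul_of_nonneg_left (hsq p y) (hθ'.1 ι)
          · have := (hΦ ι).1 p
            have := M.P_nonneg p.1 p.2 y
            positivity
      _ = ∑ ι : Fin nm, ∑ p : X × A, (1 / (nm : ℝ)) * Φ ι p * (θ' ι * B) := by
          apply Finset.sum_congr rfl; intro ι _
          apply Finset.sum_congr rfl; intro p _
          calc (∑ y : X, (1 / (nm : ℝ)) * Φ ι p * M.P p.1 p.2 y * (θ' ι * B))
              = (∑ y : X, M.P p.1 p.2 y) * ((1 / (nm : ℝ)) * Φ ι p * (θ' ι * B)) := by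
                rw [Finset.sum_mul]
                exact Finset.sum_congr rfl (fun y _ => by ring)
            _ = _ := by rw [M.P_sum]; ring
      _ = ∑ ι : Fin nm, (1 / (nm : ℝ)) * (θ' ι * B) := by
          apply Finset.sum_congr rfl; intro ι _
          calc (∑ p : X × A, (1 / (nm : ℝ)) * Φ ι p * (θ' ι * B))
              = (∑ p : X × A, Φ ι p) * ((1 / (nm : ℝ)) * (θ' ι * B)) := by
                rw [Finset.sum_mul]
                exact Finset.sum_congr rfl (fun p _ => by ring)
            _ = _ := by rw [(hΦ ι).2]; ring
      _ = (1 / (nm : ℝ)) * B := by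
          rw [← Finset.mul_sum, ← Finset.sum_mul, hθ'.2]; ring
      _ = 16 * β ^ 2 * (nm : ℝ) / (1 - M.γ) ^ 2 := by
          rw [hB]; field_simp
  · intro ι p y
    calc θ' ι * ((nm : ℝ) * Aq p y / (1 - M.γ)) ^ 2
        ≤ 1 * ((nm : ℝ) * Aq p y / (1 - M.γ)) ^ 2 :=
          mul_le_mul_of_nonneg_right (hθ1 ι) (sq_nonneg _)
      _ = ((nm : ℝ) * Aq p y / (1 - M.γ)) ^ 2 := one_mul _
      _ ≤ _ := hsq p y
end
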